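/- Let d ≥ 1 and α > 0 satisfy Σ_{x ∈ ℤ^d, x ≠ 0} exp(−α|x|²) < 1. Let (Λ_m) be any increasing sequence of finite cubes of ℤ^d containing the origin and exhausting ℤ^d, such that for every k ≥ 1 the limit p_k = lim_{m→∞} P_{Λ_m}(ℓ₀ = k) exists. Then Σ_{k ≥ 1} p_k = 1; equivalently, the probability φ(α) = 1 − Σ_{k≥1} p_k that the origin belongs to an infinite cycle is zero. -/

import Mathlib

open scoped BigOperators ENNReal

/-- Squared Euclidean distance between two points of `ℤ^d`. -/
noncomputable def distSq {d : ℕ} (x y : Fin d → ℤ) : ℝ :=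
  ∑ i, ((x i - y i : ℤ) : ℝ) ^ 2

/-- Gaussian weight of a permutation of a finite box `Λ ⊂ ℤ^d`. -/
noncomputable def permWeight {d : ℕ} (α : ℝ) (Λ : Finset (Fin d → ℤ))
    (π : Equiv.Perm {x : Fin d → ℤ // x ∈ Λ}) : ℝ :=
  ∏ x : {x : Fin d → ℤ // x ∈ Λ}, Real.exp (-α * distSq x.1 (π x).1)

/-- Partition function `Z(Λ)`. -/
noncomputable def partitionZ {d : ℕ} (α : ℝ) (Λ : Finset (Fin d → ℤ)) : ℝ :=
  ∑ π : Equiv.Perm {x : Fin d → ℤ // x ∈ Λ}, permWeight α Λ π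

/-- Length of the cycle of `π` containing the origin (`1` if `0 ∉ Λ`). -/
noncomputable def cycleLen {d : ℕ} (Λ : Finset (Fin d → ℤ))
    (π : Equiv.Perm {x : Fin d → ℤ // x ∈ Λ}) : ℕ :=
  Function.minimalPeriod (⇑(Equiv.Perm.ofSubtype π)) (0 : Fin d → ℤ)

/-- Gibbs probability that the cycle through the origin has length `k`. -/
noncomputable def cycleProb {d : ℕ} (α : ℝ) (Λ : Finset (Fin d → ℤ)) (k : ℕ) : ℝ :=
  (∑ π : Equiv.Perm {x : Fin d → ℤ // x ∈ Λ},
    if cycleLen Λ π = k then permWeight α Λ π else 0) / partitionZ α Λ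

/-- The centered cube `{-L, …, L}^d` in `ℤ^d`; it contains the origin. -/
noncomputable def centeredCube (d : ℕ) (L : ℕ) : Finset (Fin d → ℤ) :=
  Fintype.piFinset fun _ : Fin d => Finset.Icc (-(L : ℤ)) (L : ℤ)

section Basic
variable {d : ℕ} {α : ℝ} {Λ : Finset (Fin d → ℤ)}

lemma distSq_nonneg (x y : Fin d → ℤ) : 0 ≤ distSq x y :=
  Finset.sum_nonneg fun i _ => sq_nonneg _

lemma factor_le_one (hα : 0 ≤ α) (x y : Fin d → ℤ) : Real.exp (-α * distSq x y) ≤ 1 := by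
  rw [Real.exp_le_one_iff]
  nlinarith [distSq_nonneg x y]

lemma permWeight_pos (π : Equiv.Perm {x : Fin d → ℤ // x ∈ Λ}) : 0 < permWeight α Λ π :=
  Finset.prod_pos fun _ _ => Real.exp_pos _

lemma permWeight_le_one (hα : 0 ≤ α) (π : Equiv.Perm {x : Fin d → ℤ // x ∈ Λ}) :
    permWeight α Λ π ≤ 1 :=
  Finset.prod_le_one (fun _ _ => (Real.exp_pos _).le) (fun x _ => factor_le_one hα _ _)

lemma partitionZ_pos : 0 < partitionZ α Λ :=
  Finset.sum_pos (fun π _ => permWeight_pos π) ⟨1, Finset.mem_univ _⟩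

lemma cycleProb_nonneg (k : ℕ) : 0 ≤ cycleProb α Λ k := by
  apply div_nonneg _ partitionZ_pos.le
  exact Finset.sum_nonneg fun π _ => by split_ifs; exacts [(permWeight_pos _).le, le_rfl]

lemma iterate_ofSubtype (π : Equiv.Perm {x : Fin d → ℤ // x ∈ Λ}) (h0 : (0 : Fin d → ℤ) ∈ Λ)
    (n : ℕ) :
    (⇑(Equiv.Perm.ofSubtype π))^[n] (0 : Fin d → ℤ) = ((⇑π)^[n] ⟨0, h0⟩ : _).1 := by
  induction n with
  | zero => rfl
  | succ n ih =>
      rw [Function.iterate_succ_apply', Function.iterate_succ_apply', ih,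
        Equiv.Perm.ofSubtype_apply_of_mem π ((⇑π)^[n] ⟨0, h0⟩).2]

lemma isPeriodicPt_orderOf (π : Equiv.Perm {x : Fin d → ℤ // x ∈ Λ}) (z : {x : Fin d → ℤ // x ∈ Λ}) :
    Function.IsPeriodicPt (⇑π) (orderOf π) z := by
  have : (⇑π)^[orderOf π] z = z := by
    rw [← Equiv.Perm.coe_pow, pow_orderOf_eq_one]; rfl
  exact this

lemma minimalPeriod_perm_pos (π : Equiv.Perm {x : Fin d → ℤ // x ∈ Λ})
    (z : {x : Fin d → ℤ // x ∈ Λ}) : 0 < Function.minimalPeriod (⇑π) z :=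
  Function.IsPeriodicPt.minimalPeriod_pos (orderOf_pos π) (isPeriodicPt_orderOf π z)

lemma cycleLen_eq (π : Equiv.Perm {x : Fin d → ℤ // x ∈ Λ}) (h0 : (0 : Fin d → ℤ) ∈ Λ) :
    cycleLen Λ π = Function.minimalPeriod (⇑π) ⟨0, h0⟩ := by
  have key : ∀ n, Function.IsPeriodicPt (⇑(Equiv.Perm.ofSubtype π)) n 0 ↔
      Function.IsPeriodicPt (⇑π) n ⟨0, h0⟩ := by
    intro n
    unfold Function.IsPeriodicPt Function.IsFixedPt
    rw [iterate_ofSubtype π h0 n]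
    exact ⟨fun h => Subtype.ext h, fun h => by rw [h]⟩
  have h1 : Function.IsPeriodicPt (⇑(Equiv.Perm.ofSubtype π)) (Function.minimalPeriod (⇑π) ⟨0, h0⟩) 0 :=
    (key _).mpr (Function.isPeriodicPt_minimalPeriod _ _)
  have h2 : 0 < cycleLen Λ π :=
    Function.IsPeriodicPt.minimalPeriod_pos (minimalPeriod_perm_pos π _) h1
  apply le_antisymm
  · exact Function.IsPeriodicPt.minimalPeriod_le (minimalPeriod_perm_pos π _) h1
  · exact Function.IsPeriodicPt.minimalPeriod_le h2
      ((key _).mp (Function.isPeriodicPt_minimalPeriod _ _))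

lemma cycleLen_pos (π : Equiv.Perm {x : Fin d → ℤ // x ∈ Λ}) (h0 : (0 : Fin d → ℤ) ∈ Λ) :
    0 < cycleLen Λ π := by
  rw [cycleLen_eq π h0]; exact minimalPeriod_perm_pos π _

lemma cycleLen_le (π : Equiv.Perm {x : Fin d → ℤ // x ∈ Λ}) (h0 : (0 : Fin d → ℤ) ∈ Λ) :
    cycleLen Λ π ≤ Fintype.card (Equiv.Perm {x : Fin d → ℤ // x ∈ Λ}) := by
  rw [cycleLen_eq π h0]
  exact le_trans
    (Function.IsPeriodicPt.minimalPeriod_le (orderOf_pos π) (isPeriodicPt_orderOf π _))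
    orderOf_le_card_univ

end Basic

section SumOne
variable {d : ℕ} {α : ℝ} {Λ : Finset (Fin d → ℤ)}

lemma sum_cycleProb_eq_one {M : ℕ}
    (hM : ∀ π : Equiv.Perm {x : Fin d → ℤ // x ∈ Λ}, cycleLen Λ π ≤ M) :
    ∑ k ∈ Finset.range (M + 1), cycleProb α Λ k = 1 := by
  unfold cycleProb
  rw [← Finset.sum_div, Finset.sum_comm]
  have h : ∀ π : Equiv.Perm {x : Fin d → ℤ // x ∈ Λ},
      ∑ k ∈ Finset.range (M + 1), (if cycleLen Λ π = k then permWeight α Λ π else 0)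
        = permWeight α Λ π := by
    intro π
    rw [Finset.sum_ite_eq]
    simp [Nat.lt_succ_iff, hM π]
  rw [Finset.sum_congr rfl fun π _ => h π]
  exact div_self (ne_of_gt (partitionZ_pos (α := α)))

end SumOne

section Step
variable {d : ℕ} {α : ℝ}

/-- Any finite sum of Gaussian weights over points distinct from `y` is bounded by the
full sum over nonzero lattice points. -/
lemma step_bound
    (hEtop : (∑' x : {x : Fin d → ℤ // x ≠ 0}, ENNReal.ofReal (Real.exp (-α * distSq x.1 0))) ≠ ⊤)
    (y : Fin d → ℤ) (F : Finset (Fin d → ℤ)) (hF : ∀ x ∈ F, x ≠ y) :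
    ∑ x ∈ F, Real.exp (-α * distSq y x)
      ≤ (∑' x : {x : Fin d → ℤ // x ≠ 0}, ENNReal.ofReal (Real.exp (-α * distSq x.1 0))).toReal := by
  classical
  set G : Finset (Fin d → ℤ) := F.image (fun x => x - y) with hG
  have hinj : Set.InjOn (fun x : Fin d → ℤ => x - y) F := fun a _ b _ h => by
    simpa using congrArg (fun v => v + y) h
  have h1 : ∑ x ∈ F, Real.exp (-α * distSq y x) = ∑ u ∈ G, Real.exp (-α * distSq u 0) := by
    rw [hG, Finset.sum_image (fun a ha b hb h => hinj ha hb h)]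
    refine Finset.sum_congr rfl fun x _ => ?_
    congr 1
    congr 1
    unfold distSq
    refine Finset.sum_congr rfl fun i _ => ?_
    simp only [Pi.sub_apply, Pi.zero_apply]
    push_cast
    ring
  have hG0 : ∀ u ∈ G, u ≠ 0 := by
    intro u hu
    rcases Finset.mem_image.mp hu with ⟨x, hx, rfl⟩
    exact sub_ne_zero.mpr (hF x hx)
  rw [h1]
  set G' : Finset {x : Fin d → ℤ // x ≠ 0} := G.subtype (· ≠ 0) with hG'
  have h2 : ∑ u ∈ G, Real.exp (-α * distSq u 0) = ∑ v ∈ G', Real.exp (-α * distSq v.1 0) := by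
    exact (Finset.sum_subtype_of_mem _ hG0).symm
  rw [h2]
  have h3 : ∑ v ∈ G', Real.exp (-α * distSq v.1 0)
      = (∑ v ∈ G', ENNReal.ofReal (Real.exp (-α * distSq v.1 0))).toReal := by
    rw [ENNReal.toReal_sum (fun v _ => ENNReal.ofReal_ne_top)]
    exact Finset.sum_congr rfl fun v _ => (ENNReal.toReal_ofReal (Real.exp_pos _).le).symm
  rw [h3]
  exact ENNReal.toReal_mono hEtop (ENNReal.sum_le_tsum G')

end Step

section Path
variable {d : ℕ} {Λ : Finset (Fin d → ℤ)}

/-- The point preceding position `i` in the path `y, g 0, g 1, …`. -/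
def prevPt (y : {x : Fin d → ℤ // x ∈ Λ}) {n : ℕ} (g : Fin n → {x : Fin d → ℤ // x ∈ Λ})
    (i : Fin n) : {x : Fin d → ℤ // x ∈ Λ} :=
  if h : (i : ℕ) = 0 then y else g ⟨(i : ℕ) - 1, lt_of_le_of_lt (Nat.sub_le _ _) i.2⟩

/-- Weight of a path, with indicator forcing consecutive points to be distinct. -/
noncomputable def pathW (α : ℝ) (y : {x : Fin d → ℤ // x ∈ Λ}) {n : ℕ}
    (g : Fin n → {x : Fin d → ℤ // x ∈ Λ}) : ℝ :=
  ∏ i, (if prevPt y g i = g i then 0 else Real.exp (-α * distSq (prevPt y g i).1 (g i).1))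

lemma prevPt_cons_zero (y x : {x : Fin d → ℤ // x ∈ Λ}) {n : ℕ}
    (h : Fin n → {x : Fin d → ℤ // x ∈ Λ}) :
    prevPt y (Fin.cons x h) (0 : Fin (n + 1)) = y := rfl

lemma prevPt_cons_succ (y x : {x : Fin d → ℤ // x ∈ Λ}) {n : ℕ}
    (h : Fin n → {x : Fin d → ℤ // x ∈ Λ}) (i : Fin n) :
    prevPt y (Fin.cons x h) i.succ = prevPt x h i := by
  unfold prevPt
  rw [dif_neg (by simp [Fin.val_succ])]
  by_cases hi : (i : ℕ) = 0
  · rw [dif_pos hi]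
    have : (⟨(i.succ : ℕ) - 1, lt_of_le_of_lt (Nat.sub_le _ _) i.succ.2⟩ : Fin (n + 1))
        = (0 : Fin (n+1)) := by
      ext; simp [Fin.val_succ, hi]
    rw [this, Fin.cons_zero]
  · rw [dif_neg hi]
    have : (⟨(i.succ : ℕ) - 1, lt_of_le_of_lt (Nat.sub_le _ _) i.succ.2⟩ : Fin (n + 1))
        = Fin.succ ⟨(i : ℕ) - 1, lt_of_le_of_lt (Nat.sub_le _ _) i.2⟩ := by
      ext
      simp [Fin.val_succ]
      omega
    rw [this, Fin.cons_succ]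

lemma pathW_nonneg (α : ℝ) (y : {x : Fin d → ℤ // x ∈ Λ}) {n : ℕ}
    (g : Fin n → {x : Fin d → ℤ // x ∈ Λ}) : 0 ≤ pathW α y g :=
  Finset.prod_nonneg fun i _ => by split_ifs; exacts [le_rfl, (Real.exp_pos _).le]

lemma pathW_cons (α : ℝ) (y x : {x : Fin d → ℤ // x ∈ Λ}) {n : ℕ}
    (h : Fin n → {x : Fin d → ℤ // x ∈ Λ}) :
    pathW α y (Fin.cons x h)
      = (if x = y then 0 else Real.exp (-α * distSq y.1 x.1)) * pathW α x h := by
  unfold pathW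
  rw [Fin.prod_univ_succ]
  congr 1
  · rw [prevPt_cons_zero, Fin.cons_zero]
    by_cases hxy : x = y
    · rw [if_pos hxy, if_pos hxy.symm]
    · rw [if_neg hxy, if_neg (fun h' => hxy h'.symm)]
  · exact Finset.prod_congr rfl fun i _ => by rw [prevPt_cons_succ, Fin.cons_succ]

lemma sum_pathW_le {α : ℝ} {ε : ℝ} (hε : 0 ≤ ε)
    (hstep : ∀ y : {x : Fin d → ℤ // x ∈ Λ},
      (∑ x : {x : Fin d → ℤ // x ∈ Λ},
        if x = y then 0 else Real.exp (-α * distSq y.1 x.1)) ≤ ε) :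
    ∀ (n : ℕ) (y : {x : Fin d → ℤ // x ∈ Λ}),
      (∑ g : Fin n → {x : Fin d → ℤ // x ∈ Λ}, pathW α y g) ≤ ε ^ n := by
  intro n
  induction n with
  | zero =>
      intro y
      simp [pathW]
  | succ n ih =>
      intro y
      rw [← Equiv.sum_comp (Fin.consEquiv (fun _ : Fin (n+1) => {x : Fin d → ℤ // x ∈ Λ}))
        (fun g => pathW α y g)]
      have hsymm : ∀ p : {x : Fin d → ℤ // x ∈ Λ} × (Fin n → {x : Fin d → ℤ // x ∈ Λ}),
          (Fin.consEquiv (fun _ : Fin (n+1) => {x : Fin d → ℤ // x ∈ Λ})) p = Fin.cons p.1 p.2 := by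
        intro p; rfl
      calc (∑ p : {x : Fin d → ℤ // x ∈ Λ} × (Fin n → {x : Fin d → ℤ // x ∈ Λ}),
              pathW α y ((Fin.consEquiv (fun _ : Fin (n+1) => {x : Fin d → ℤ // x ∈ Λ})) p))
          = ∑ x : {x : Fin d → ℤ // x ∈ Λ}, ∑ h : Fin n → {x : Fin d → ℤ // x ∈ Λ},
              (if x = y then 0 else Real.exp (-α * distSq y.1 x.1)) * pathW α x h := by
            rw [Fintype.sum_prod_type]
            exact Finset.sum_congr rfl fun x _ => Finset.sum_congr rfl fun h _ => by
              rw [hsymm, pathW_cons]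
        _ ≤ ∑ x : {x : Fin d → ℤ // x ∈ Λ},
              (if x = y then 0 else Real.exp (-α * distSq y.1 x.1)) * ε ^ n := by
            refine Finset.sum_le_sum fun x _ => ?_
            rw [← Finset.mul_sum]
            refine mul_le_mul_of_nonneg_left (ih x) ?_
            split_ifs; exacts [le_rfl, (Real.exp_pos _).le]
        _ ≤ ε * ε ^ n := by
            rw [← Finset.sum_mul]
            exact mul_le_mul_of_nonneg_right (hstep y) (pow_nonneg hε n)
        _ = ε ^ (n + 1) := (pow_succ' ε n).symm

end Path

section Main
variable {d : ℕ}

lemma cycleProb_le_pow {α ε : ℝ} {Λ : Finset (Fin d → ℤ)} (hα : 0 < α)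
    (h0 : (0 : Fin d → ℤ) ∈ Λ) (hε : 0 ≤ ε)
    (hstep : ∀ y : {x : Fin d → ℤ // x ∈ Λ},
      (∑ x : {x : Fin d → ℤ // x ∈ Λ},
        if x = y then 0 else Real.exp (-α * distSq y.1 x.1)) ≤ ε)
    (k : ℕ) (hk : 1 ≤ k) :
    cycleProb α Λ k ≤ ε ^ (k - 1) := by
  classical
  set z : {x : Fin d → ℤ // x ∈ Λ} := ⟨0, h0⟩ with hz
  -- general facts about permutations with minimal period k at z
  have hqs : ∀ (π : Equiv.Perm {x : Fin d → ℤ // x ∈ Λ}) (i : ℕ),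
      π ((π ^ i) z) = (π ^ (i + 1)) z := by
    intro π i
    rw [pow_succ' π i]
    rfl
  have hq : ∀ (π : Equiv.Perm {x : Fin d → ℤ // x ∈ Λ}),
      Function.minimalPeriod (⇑π) z = k → ∀ i : ℕ, (π ^ i) z = (π ^ (i % k)) z := by
    intro π hπ i
    have h := Function.iterate_mod_minimalPeriod_eq (f := ⇑π) (x := z) (n := i)
    rw [hπ] at h
    exact h.symm
  have hinjq : ∀ (π : Equiv.Perm {x : Fin d → ℤ // x ∈ Λ}),
      Function.minimalPeriod (⇑π) z = k →
      ∀ i < k, ∀ j < k, (π ^ i) z = (π ^ j) z → i = j := by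
    intro π hπ i hi j hj hij
    have h := Function.iterate_injOn_Iio_minimalPeriod (f := ⇑π) (x := z)
    rw [hπ] at h
    exact h hi hj hij
  have horb : ∀ (π : Equiv.Perm {x : Fin d → ℤ // x ∈ Λ}),
      Function.minimalPeriod (⇑π) z = k →
      ∀ x, π.SameCycle z x ↔ ∃ i < k, (π ^ i) z = x := by
    intro π hπ x
    constructor
    · intro h
      obtain ⟨i, -, -, hi⟩ := Equiv.Perm.SameCycle.exists_pow_eq π h
      exact ⟨i % k, Nat.mod_lt _ hk, by rw [← hq π hπ i, hi]⟩
    · rintro ⟨i, _, rfl⟩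
      exact ⟨(i : ℤ), by rw [zpow_natCast]⟩
  have hσfix : ∀ (π : Equiv.Perm {x : Fin d → ℤ // x ∈ Λ}) (x),
      π.SameCycle z x → (π * (π.cycleOf z)⁻¹) x = x := by
    intro π x hx
    have : (π.cycleOf z)⁻¹ x = π⁻¹ x := by
      rw [Equiv.Perm.cycleOf_inv, Equiv.Perm.cycleOf_apply,
        if_pos ((Equiv.Perm.sameCycle_inv).mpr hx)]
    rw [Equiv.Perm.mul_apply, this, ← Equiv.Perm.mul_apply, mul_inv_cancel, Equiv.Perm.one_apply]
  have hσnot : ∀ (π : Equiv.Perm {x : Fin d → ℤ // x ∈ Λ}) (x),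
      ¬ π.SameCycle z x → (π * (π.cycleOf z)⁻¹) x = π x := by
    intro π x hx
    have : (π.cycleOf z)⁻¹ x = x := by
      rw [Equiv.Perm.cycleOf_inv, Equiv.Perm.cycleOf_apply,
        if_neg (fun h => hx ((Equiv.Perm.sameCycle_inv).mp h))]
    rw [Equiv.Perm.mul_apply, this]
  -- reduce to a bound on the numerator
  unfold cycleProb
  rw [div_le_iff₀ (partitionZ_pos (α := α))]
  have hnum : (∑ π : Equiv.Perm {x : Fin d → ℤ // x ∈ Λ},
      if cycleLen Λ π = k then permWeight α Λ π else 0)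
      = ∑ π ∈ Finset.univ.filter
          (fun π : Equiv.Perm {x : Fin d → ℤ // x ∈ Λ} =>
            Function.minimalPeriod (⇑π) z = k), permWeight α Λ π := by
    rw [Finset.sum_filter]
    exact Finset.sum_congr rfl fun π _ => by rw [cycleLen_eq π h0]
  rw [hnum]
  set A : Finset (Equiv.Perm {x : Fin d → ℤ // x ∈ Λ}) :=
    Finset.univ.filter (fun π => Function.minimalPeriod (⇑π) z = k) with hA
  have hmemA : ∀ π, π ∈ A ↔ Function.minimalPeriod (⇑π) z = k := by
    intro π; rw [hA, Finset.mem_filter]; simp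
  -- the decomposition map
  set g : Equiv.Perm {x : Fin d → ℤ // x ∈ Λ} → (Fin (k - 1) → {x : Fin d → ℤ // x ∈ Λ}) :=
    fun π i => (π ^ ((i : ℕ) + 1)) z with hg
  set σ : Equiv.Perm {x : Fin d → ℤ // x ∈ Λ} → Equiv.Perm {x : Fin d → ℤ // x ∈ Λ} :=
    fun π => π * (π.cycleOf z)⁻¹ with hσ
  -- the pointwise weight bound
  have hweight : ∀ π ∈ A, permWeight α Λ π ≤ pathW α z (g π) * permWeight α Λ (σ π) := by
    intro π hπA
    have hπ : Function.minimalPeriod (⇑π) z = k := (hmemA π).mp hπA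
    set O : Finset {x : Fin d → ℤ // x ∈ Λ} :=
      (Finset.range k).image (fun i => (π ^ i) z) with hO
    have hmemO : ∀ x, x ∈ O ↔ ∃ i < k, (π ^ i) z = x := by
      intro x
      rw [hO, Finset.mem_image]
      simp only [Finset.mem_range]
    have hOcyc : ∀ x, x ∈ O ↔ π.SameCycle z x := by
      intro x; rw [hmemO x, ← horb π hπ x]
    -- split the weight of π
    have hsplit : permWeight α Λ π =
        (∏ x ∈ Finset.univ \ O, Real.exp (-α * distSq x.1 (π x).1)) *
        (∏ x ∈ O, Real.exp (-α * distSq x.1 (π x).1)) := by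
      unfold permWeight
      rw [Finset.prod_sdiff (Finset.subset_univ O)]
    -- product over the orbit
    have hprodO : (∏ x ∈ O, Real.exp (-α * distSq x.1 (π x).1))
        = ∏ i ∈ Finset.range k, Real.exp (-α * distSq ((π ^ i) z).1 ((π ^ (i + 1)) z).1) := by
      rw [hO, Finset.prod_image]
      · exact Finset.prod_congr rfl fun i _ => by rw [hqs π i]
      · intro i hi j hj hij
        exact hinjq π hπ i (Finset.mem_range.mp hi) j (Finset.mem_range.mp hj) hij
    -- product over the rest is the weight of σ π
    have hrest : permWeight α Λ (σ π)
        = ∏ x ∈ Finset.univ \ O, Real.exp (-α * distSq x.1 (π x).1) := by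
      unfold permWeight
      rw [← Finset.prod_sdiff (Finset.subset_univ O)]
      have hOne : (∏ x ∈ O, Real.exp (-α * distSq x.1 ((σ π) x).1)) = 1 := by
        apply Finset.prod_eq_one
        intro x hx
        rw [hσ]
        simp only []
        rw [hσfix π x ((hOcyc x).mp hx)]
        have : distSq x.1 x.1 = 0 := by simp [distSq]
        rw [this, mul_zero, Real.exp_zero]
      rw [hOne, mul_one]
      refine Finset.prod_congr rfl fun x hx => ?_
      have hxO : x ∉ O := (Finset.mem_sdiff.mp hx).2
      rw [hσ]
      simp only []
      rw [hσnot π x (fun h => hxO ((hOcyc x).mpr h))]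
    -- identify the path weight
    have hpath : pathW α z (g π)
        = ∏ i ∈ Finset.range (k - 1),
            Real.exp (-α * distSq ((π ^ i) z).1 ((π ^ (i + 1)) z).1) := by
      unfold pathW
      rw [← Fin.prod_univ_eq_prod_range]
      refine Finset.prod_congr rfl fun i _ => ?_
      have hprev : prevPt z (g π) i = (π ^ (i : ℕ)) z := by
        unfold prevPt
        by_cases hi : (i : ℕ) = 0
        · rw [dif_pos hi, hi, pow_zero]; rfl
        · rw [dif_neg hi]
          have hi' : ((i : ℕ) - 1) + 1 = (i : ℕ) := by omega
          show (π ^ (((i : ℕ) - 1) + 1)) z = (π ^ (i : ℕ)) z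
          rw [hi']
      have hgi : g π i = (π ^ ((i : ℕ) + 1)) z := rfl
      have hne : prevPt z (g π) i ≠ g π i := by
        rw [hprev, hgi]
        intro h
        have := hinjq π hπ (i : ℕ) (by omega) ((i : ℕ) + 1) (by omega) h
        omega
      rw [if_neg hne, hprev, hgi]
    -- put everything together
    have hk1 : k - 1 + 1 = k := Nat.succ_pred_eq_of_pos hk
    have hsucc : (∏ i ∈ Finset.range k,
          Real.exp (-α * distSq ((π ^ i) z).1 ((π ^ (i + 1)) z).1))
        = (∏ i ∈ Finset.range (k - 1),
            Real.exp (-α * distSq ((π ^ i) z).1 ((π ^ (i + 1)) z).1))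
          * Real.exp (-α * distSq ((π ^ (k - 1)) z).1 ((π ^ (k - 1 + 1)) z).1) := by
      conv_lhs => rw [← hk1]
      rw [Finset.prod_range_succ]
    have hlast : (∏ i ∈ Finset.range k,
          Real.exp (-α * distSq ((π ^ i) z).1 ((π ^ (i + 1)) z).1))
        ≤ pathW α z (g π) := by
      rw [hsucc, hpath]
      exact mul_le_of_le_one_right
        (Finset.prod_nonneg fun i _ => (Real.exp_pos _).le) (factor_le_one hα.le _ _)
    calc permWeight α Λ π
        = (∏ x ∈ Finset.univ \ O, Real.exp (-α * distSq x.1 (π x).1)) *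
          (∏ x ∈ O, Real.exp (-α * distSq x.1 (π x).1)) := hsplit
      _ = permWeight α Λ (σ π) *
          (∏ i ∈ Finset.range k,
            Real.exp (-α * distSq ((π ^ i) z).1 ((π ^ (i + 1)) z).1)) := by
            rw [hrest, hprodO]
      _ ≤ permWeight α Λ (σ π) * pathW α z (g π) :=
            mul_le_mul_of_nonneg_left hlast (permWeight_pos _).le
      _ = pathW α z (g π) * permWeight α Λ (σ π) := mul_comm _ _
  -- injectivity of the decomposition
  have hinj : Set.InjOn (fun π => (g π, σ π)) A := by
    intro π hπA π' hπ'A heq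
    have hπ : Function.minimalPeriod (⇑π) z = k := (hmemA π).mp hπA
    have hπ' : Function.minimalPeriod (⇑π') z = k := (hmemA π').mp hπ'A
    have hg_eq : g π = g π' := congrArg Prod.fst heq
    have hσ_eq : σ π = σ π' := congrArg Prod.snd heq
    have hqq : ∀ i : ℕ, (π ^ i) z = (π' ^ i) z := by
      have hlt : ∀ i < k, (π ^ i) z = (π' ^ i) z := by
        intro i hik
        rcases Nat.eq_zero_or_pos i with h | h
        · subst h; rfl
        · have hi1 : i - 1 < k - 1 := by omega
          have := congrFun hg_eq ⟨i - 1, hi1⟩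
          simp only [hg] at this
          have hi : i - 1 + 1 = i := by omega
          rwa [hi] at this
      intro i
      rw [hq π hπ i, hq π' hπ' i]
      exact hlt _ (Nat.mod_lt _ hk)
    have hcyc : π.cycleOf z = π'.cycleOf z := by
      ext x
      by_cases hx : π.SameCycle z x
      · obtain ⟨i, hik, rfl⟩ := (horb π hπ x).mp hx
        have hx' : π'.SameCycle z ((π ^ i) z) :=
          (horb π' hπ' _).mpr ⟨i, hik, (hqq i).symm⟩
        rw [Equiv.Perm.cycleOf_apply, Equiv.Perm.cycleOf_apply, if_pos hx, if_pos hx',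
          hqs π i, hqq (i+1), ← hqs π' i, hqq i]
      · have hx' : ¬ π'.SameCycle z x := by
          intro h
          obtain ⟨i, hik, rfl⟩ := (horb π' hπ' x).mp h
          exact hx ((horb π hπ _).mpr ⟨i, hik, hqq i⟩)
        rw [Equiv.Perm.cycleOf_apply, Equiv.Perm.cycleOf_apply, if_neg hx, if_neg hx']
    have h1 : π = σ π * π.cycleOf z := by
      rw [hσ]; simp only []
      rw [inv_mul_cancel_right]
    rw [h1, hσ_eq, hcyc]
    rw [hσ]; simp only []
    rw [inv_mul_cancel_right]
  -- final chain
  calc (∑ π ∈ A, permWeight α Λ π)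
      ≤ ∑ π ∈ A, pathW α z (g π) * permWeight α Λ (σ π) := Finset.sum_le_sum hweight
    _ = ∑ y ∈ A.image (fun π => (g π, σ π)),
          pathW α z y.1 * permWeight α Λ y.2 := by
        rw [Finset.sum_image (fun a ha b hb h => hinj ha hb h)]
    _ ≤ ∑ y : (Fin (k - 1) → {x : Fin d → ℤ // x ∈ Λ}) ×
          Equiv.Perm {x : Fin d → ℤ // x ∈ Λ},
          pathW α z y.1 * permWeight α Λ y.2 := by
        apply Finset.sum_le_sum_of_subset_of_nonneg (Finset.subset_univ _)
        intro y _ _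
        exact mul_nonneg (pathW_nonneg α z y.1) (permWeight_pos y.2).le
    _ = (∑ gg : Fin (k - 1) → {x : Fin d → ℤ // x ∈ Λ}, pathW α z gg) * partitionZ α Λ := by
        rw [Fintype.sum_prod_type, Finset.sum_mul]
        refine Finset.sum_congr rfl fun gg _ => ?_
        unfold partitionZ
        rw [Finset.mul_sum]
    _ ≤ ε ^ (k - 1) * partitionZ α Λ :=
        mul_le_mul_of_nonneg_right (sum_pathW_le hε hstep (k - 1) z)
          (partitionZ_pos (α := α)).le

end Main

section Assemble
open Filter
variable {d : ℕ}

lemma zero_mem_centeredCube (d L : ℕ) : (0 : Fin d → ℤ) ∈ centeredCube d L := by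
  refine Fintype.mem_piFinset.mpr fun i => ?_
  simp only [Pi.zero_apply, Finset.mem_Icc]
  omega

lemma geom_tail_le {ε : ℝ} (hε : 0 ≤ ε) (hε1 : ε < 1) (n : ℕ) :
    ∑ i ∈ Finset.range n, ε ^ i ≤ 1 / (1 - ε) := by
  have hsummable : Summable fun i : ℕ => ε ^ i := summable_geometric_of_lt_one hε hε1
  calc ∑ i ∈ Finset.range n, ε ^ i
      ≤ ∑' i : ℕ, ε ^ i := Summable.sum_le_tsum _ (fun i _ => pow_nonneg hε i) hsummable
    _ = (1 - ε)⁻¹ := tsum_geometric_of_lt_one hε hε1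
    _ = 1 / (1 - ε) := (one_div _).symm

lemma sum_range_bounds {α ε : ℝ} {Λ : Finset (Fin d → ℤ)} (hα : 0 < α)
    (h0 : (0 : Fin d → ℤ) ∈ Λ) (hε : 0 ≤ ε) (hε1 : ε < 1)
    (hstep : ∀ y : {x : Fin d → ℤ // x ∈ Λ},
      (∑ x : {x : Fin d → ℤ // x ∈ Λ},
        if x = y then 0 else Real.exp (-α * distSq y.1 x.1)) ≤ ε)
    (N : ℕ) :
    1 - ε ^ N / (1 - ε) ≤ ∑ k ∈ Finset.range N, cycleProb α Λ (k + 1) ∧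
      ∑ k ∈ Finset.range N, cycleProb α Λ (k + 1) ≤ 1 := by
  classical
  set M := max N (Fintype.card (Equiv.Perm {x : Fin d → ℤ // x ∈ Λ})) with hM
  have hMb : ∀ π : Equiv.Perm {x : Fin d → ℤ // x ∈ Λ}, cycleLen Λ π ≤ M :=
    fun π => le_trans (cycleLen_le π h0) (le_max_right _ _)
  have htot : ∑ k ∈ Finset.range (M + 1), cycleProb α Λ k = 1 := sum_cycleProb_eq_one hMb
  have h0prob : cycleProb α Λ 0 = 0 := by
    unfold cycleProb
    rw [Finset.sum_eq_zero, zero_div]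
    intro π _
    rw [if_neg (cycleLen_pos π h0).ne']
  have hshift : ∑ k ∈ Finset.range (N + 1), cycleProb α Λ k
      = ∑ k ∈ Finset.range N, cycleProb α Λ (k + 1) := by
    rw [Finset.sum_range_succ' (fun k => cycleProb α Λ k) N, h0prob, add_zero]
  have hNM : N + 1 ≤ M + 1 := by
    have : N ≤ M := le_max_left _ _
    omega
  have hupper : ∑ k ∈ Finset.range (N + 1), cycleProb α Λ k ≤ 1 := by
    rw [← htot]
    exact Finset.sum_le_sum_of_subset_of_nonneg (Finset.range_subset_range.mpr hNM)
      (fun k _ _ => cycleProb_nonneg k)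
  have hsub : ∑ k ∈ Finset.Ico (N + 1) (M + 1), cycleProb α Λ k
      = ∑ k ∈ Finset.range (M + 1), cycleProb α Λ k
        - ∑ k ∈ Finset.range (N + 1), cycleProb α Λ k :=
    Finset.sum_Ico_eq_sub _ hNM
  have htail : ∑ k ∈ Finset.Ico (N + 1) (M + 1), cycleProb α Λ k ≤ ε ^ N / (1 - ε) := by
    have h1 : ∑ k ∈ Finset.Ico (N + 1) (M + 1), cycleProb α Λ k
        ≤ ∑ k ∈ Finset.Ico (N + 1) (M + 1), ε ^ (k - 1) := by
      refine Finset.sum_le_sum fun k hk => ?_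
      have hk1 : 1 ≤ k := by
        have := (Finset.mem_Ico.mp hk).1
        omega
      exact cycleProb_le_pow hα h0 hε hstep k hk1
    have h2 : ∑ k ∈ Finset.Ico (N + 1) (M + 1), ε ^ (k - 1)
        = ∑ i ∈ Finset.range (M + 1 - (N + 1)), ε ^ (N + i) := by
      rw [Finset.sum_Ico_eq_sum_range]
      exact Finset.sum_congr rfl fun i _ => by congr 1; omega
    have h3 : ∑ i ∈ Finset.range (M + 1 - (N + 1)), ε ^ (N + i)
        = ε ^ N * ∑ i ∈ Finset.range (M + 1 - (N + 1)), ε ^ i := by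
      rw [Finset.mul_sum]
      exact Finset.sum_congr rfl fun i _ => pow_add ε N i
    calc ∑ k ∈ Finset.Ico (N + 1) (M + 1), cycleProb α Λ k
        ≤ ∑ k ∈ Finset.Ico (N + 1) (M + 1), ε ^ (k - 1) := h1
      _ = ε ^ N * ∑ i ∈ Finset.range (M + 1 - (N + 1)), ε ^ i := by rw [h2, h3]
      _ ≤ ε ^ N * (1 / (1 - ε)) :=
          mul_le_mul_of_nonneg_left (geom_tail_le hε hε1 _) (pow_nonneg hε N)
      _ = ε ^ N / (1 - ε) := by ring
  constructor
  · rw [← hshift]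
    linarith [hsub, htail, htot]
  · rw [← hshift]
    exact hupper

lemma step_sum_le {α : ℝ} {Λ : Finset (Fin d → ℤ)}
    (hEtop : (∑' x : {x : Fin d → ℤ // x ≠ 0},
      ENNReal.ofReal (Real.exp (-α * distSq x.1 0))) ≠ ⊤)
    (y : {x : Fin d → ℤ // x ∈ Λ}) :
    (∑ x : {x : Fin d → ℤ // x ∈ Λ},
      if x = y then 0 else Real.exp (-α * distSq y.1 x.1))
      ≤ (∑' x : {x : Fin d → ℤ // x ≠ 0},
          ENNReal.ofReal (Real.exp (-α * distSq x.1 0))).toReal := by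
  classical
  have hrw : ∀ x : {v : Fin d → ℤ // v ∈ Λ},
      (if x = y then 0 else Real.exp (-α * distSq y.1 x.1))
        = if x.1 = y.1 then 0 else Real.exp (-α * distSq y.1 x.1) := by
    intro x
    by_cases h : x = y
    · rw [if_pos h, if_pos (congrArg Subtype.val h)]
    · rw [if_neg h, if_neg (fun hv => h (Subtype.ext hv))]
  have hstep1 : (∑ x : {x : Fin d → ℤ // x ∈ Λ},
      if x = y then 0 else Real.exp (-α * distSq y.1 x.1))
      = ∑ v ∈ Λ, (if v = y.1 then 0 else Real.exp (-α * distSq y.1 v)) := by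
    rw [Finset.univ_eq_attach,
      ← Finset.sum_attach Λ (fun v => if v = y.1 then 0 else Real.exp (-α * distSq y.1 v))]
    exact Finset.sum_congr rfl (fun x _ => hrw x)
  rw [hstep1]
  have hflt : (∑ v ∈ Λ, if v = y.1 then 0 else Real.exp (-α * distSq y.1 v))
      = ∑ v ∈ Λ.filter (· ≠ y.1), Real.exp (-α * distSq y.1 v) := by
    rw [Finset.sum_filter]
    exact Finset.sum_congr rfl fun v _ => (ite_not (v = y.1) _ _).symm
  rw [hflt]
  exact step_bound hEtop y.1 _ (fun x hx => (Finset.mem_filter.mp hx).2)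

end Assemble

open Filter in
/-- If `Σ_{x≠0} exp(-α|x|²) < 1`, then along any increasing exhausting
sequence of cubes for which the limits `p_k = lim_m P_{Λ_m}(ℓ₀ = k)` exist for all `k ≥ 1`,
one has `Σ_{k≥1} p_k = 1` (no infinite cycles: `φ(α) = 0`). -/
theorem no_infinite_cycles {d : ℕ} (hd : 1 ≤ d) {α : ℝ} (hα : 0 < α)
    (hsmall : (∑' x : {x : Fin d → ℤ // x ≠ 0},
        ENNReal.ofReal (Real.exp (-α * distSq x.1 0))) < 1)
    (L : ℕ → ℕ) (hmono : Monotone L) (hexh : Tendsto L atTop atTop)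
    (p : ℕ → ℝ)
    (hp : ∀ k : ℕ, 1 ≤ k →
      Tendsto (fun m => cycleProb α (centeredCube d (L m)) k) atTop (nhds (p k))) :
    HasSum (fun k : ℕ => p (k + 1)) 1 := by
  classical
  set E := ∑' x : {x : Fin d → ℤ // x ≠ 0}, ENNReal.ofReal (Real.exp (-α * distSq x.1 0))
    with hE
  have hEtop : E ≠ ⊤ := hsmall.ne_top
  set ε : ℝ := E.toReal with hεdef
  have hε : 0 ≤ ε := ENNReal.toReal_nonneg
  have hε1 : ε < 1 := by
    have h := (ENNReal.toReal_lt_toReal hEtop (by simp : (1 : ℝ≥0∞) ≠ ⊤)).mpr hsmall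
    simpa using h
  have hbounds : ∀ (m N : ℕ),
      1 - ε ^ N / (1 - ε)
        ≤ ∑ k ∈ Finset.range N, cycleProb α (centeredCube d (L m)) (k + 1) ∧
      ∑ k ∈ Finset.range N, cycleProb α (centeredCube d (L m)) (k + 1) ≤ 1 := by
    intro m N
    exact sum_range_bounds hα (zero_mem_centeredCube d (L m)) hε hε1
      (fun y => step_sum_le hEtop y) N
  have hsumtend : ∀ N : ℕ, Tendsto
      (fun m => ∑ k ∈ Finset.range N, cycleProb α (centeredCube d (L m)) (k + 1))
      atTop (nhds (∑ k ∈ Finset.range N, p (k + 1))) :=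
    fun N => tendsto_finset_sum _ (fun k _ => hp (k + 1) (Nat.le_add_left 1 k))
  have hup : ∀ N, ∑ k ∈ Finset.range N, p (k + 1) ≤ 1 := fun N =>
    le_of_tendsto (hsumtend N) (Eventually.of_forall fun m => (hbounds m N).2)
  have hlow : ∀ N, 1 - ε ^ N / (1 - ε) ≤ ∑ k ∈ Finset.range N, p (k + 1) := fun N =>
    ge_of_tendsto (hsumtend N) (Eventually.of_forall fun m => (hbounds m N).1)
  have hpnonneg : ∀ k : ℕ, 0 ≤ p (k + 1) := fun k =>
    ge_of_tendsto (hp (k + 1) (Nat.le_add_left 1 k))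
      (Eventually.of_forall fun m => cycleProb_nonneg (k + 1))
  rw [hasSum_iff_tendsto_nat_of_nonneg hpnonneg]
  have hlim : Tendsto (fun N : ℕ => 1 - ε ^ N / (1 - ε)) atTop (nhds 1) := by
    have h1 : Tendsto (fun N : ℕ => ε ^ N / (1 - ε)) atTop (nhds 0) := by
      have h := (tendsto_pow_atTop_nhds_zero_of_lt_one hε hε1).div_const (1 - ε)
      simpa using h
    have h2 := (tendsto_const_nhds (x := (1 : ℝ)) (f := (atTop : Filter ℕ))).sub h1
    simpa using h2
  exact tendsto_of_tendsto_of_tendsto_of_le_of_le hlim tendsto_const_nhds hlow hup
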